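/- For all integers c ≥ 5, the total palindromic genus satisfies the recurrence g_p(c) = 2·g_p(c−2) + t_p(c−2) + (−1)^{⌊(c+1)/2⌋}. -/

import Mathlib

/-- `tpKnot c g` is t_p(c,g), the number of words of palindromic type representing
2-bridge knots of crossing number `c` and genus `g`, given by the explicit formula
t_p(c,g) = (-1)^(c'-g-1) * Σ_{n=0}^{c'-g-1} (-1)^n * binom(n+g-1, n) with
c' = ⌊(c+1)/2⌋, the sum being empty when c' - g - 1 < 0, and t_p(c,0) = 0. -/
def tpKnot (c g : ℕ) : ℤ :=
  if g = 0 then 0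
  else (-1 : ℤ) ^ ((c + 1) / 2 - g - 1) *
    ∑ n ∈ Finset.range ((c + 1) / 2 - g), (-1 : ℤ) ^ n * (Nat.choose (n + g - 1) n)

/-- `tpTotal c` is t_p(c) = Σ_{g=1}^{⌊(c−1)/2⌋} t_p(c,g), the number of words of palindromic type. -/
def tpTotal (c : ℕ) : ℤ := ∑ g ∈ Finset.Icc 1 ((c - 1) / 2), tpKnot c g

/-- `gpTotal c` is the total palindromic genus g_p(c) = Σ_{i=1}^{⌊(c−1)/2⌋} i·t_p(c,i). -/
def gpTotal (c : ℕ) : ℤ := ∑ i ∈ Finset.Icc 1 ((c - 1) / 2), (i : ℤ) * tpKnot c i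

/-! Writing `c' = ⌊(c + 1) / 2⌋`, `t_p(c, g)` depends only on `c'` and `g`, and it inherits from
the binomial coefficients in its alternating sum Pascal's rule
`t(c' + 1, g + 1) = t(c', g) + t(c', g + 1)`. Substituting this into `Σ i · t(c' + 1, i)` and
shifting the index gives `2 Σ i · t(c', i) + Σ t(c', i)` plus the boundary term `t(c', 0)`;
evaluated by the formula (not set to `0`), it is the sign `(-1) ^ (c' - 1)`. Passing from `c` to `c - 2` lowers `c'` by one. -/

open Finset

def altChooseSum (N g : ℕ) : ℤ := ∑ n ∈ range N, (-1 : ℤ) ^ n * ((n + g - 1).choose n : ℤ)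

/-- At `g = 0 < k` this is `(-1) ^ (k - 1)` rather than `tpKnot`'s `0`; that makes Pascal's rule
`tpHalf_succ_succ` hold with no side condition. -/
def tpHalf (k g : ℕ) : ℤ := (-1 : ℤ) ^ (k - g - 1) * altChooseSum (k - g) g

lemma altChooseSum_succ_succ (N g : ℕ) :
    altChooseSum (N + 1) (g + 1) = altChooseSum (N + 1) g - altChooseSum N (g + 1) := by
  induction N with
  | zero => simp [altChooseSum]
  | succ N ih =>
    have pascal : ((N + g + 1).choose (N + 1) : ℤ) = (N + g).choose N + (N + g).choose (N + 1) := by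
      rw [Nat.choose_succ_succ']; push_cast; ring
    have last := sum_range_succ (fun n => (-1 : ℤ) ^ n * ((n + g).choose n : ℤ)) N
    simp only [altChooseSum, Nat.add_succ_sub_one, sum_range_succ _ (N + 1)] at ih ⊢
    rw [show N + 1 + g - 1 = N + g by omega, show N + 1 + g = N + g + 1 by ring]
    linear_combination ih + last + (-1 : ℤ) ^ (N + 1) * pascal

lemma altChooseSum_succ_zero (N : ℕ) : altChooseSum (N + 1) 0 = 1 := by
  simp [altChooseSum, sum_range_succ', Nat.choose_succ_self]

lemma tpHalf_of_le {k g : ℕ} (h : k ≤ g) : tpHalf k g = 0 := by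
  simp [tpHalf, altChooseSum, Nat.sub_eq_zero_of_le h]

lemma tpHalf_add_succ (g t : ℕ) : tpHalf (g + t + 1) g = (-1 : ℤ) ^ t * altChooseSum (t + 1) g := by
  rw [tpHalf, show g + t + 1 - g = t + 1 by omega, Nat.add_sub_cancel]

lemma tpHalf_succ_zero (k : ℕ) : tpHalf (k + 1) 0 = (-1 : ℤ) ^ k := by
  simpa [altChooseSum_succ_zero] using tpHalf_add_succ 0 k

lemma tpHalf_succ_succ (k g : ℕ) : tpHalf (k + 1) (g + 1) = tpHalf k g + tpHalf k (g + 1) := by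
  rcases le_or_gt k g with h | h
  · rw [tpHalf_of_le h, tpHalf_of_le (by omega), tpHalf_of_le (by omega), add_zero]
  obtain ⟨s, rfl⟩ := Nat.exists_eq_add_of_lt h
  cases s with
  | zero => simp [tpHalf, altChooseSum]
  | succ s =>
    rw [tpHalf_add_succ g (s + 1), show g + (s + 1) + 1 + 1 = g + 1 + (s + 1) + 1 by ring,
      show g + (s + 1) + 1 = g + 1 + s + 1 by ring, tpHalf_add_succ, tpHalf_add_succ,
      altChooseSum_succ_succ (s + 1)]
    ring

lemma sum_mul_tpHalf_succ (n : ℕ) :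
    ∑ i ∈ range (n + 1), ((i + 1 : ℕ) : ℤ) * tpHalf (n + 2) (i + 1)
      = 2 * ∑ i ∈ range n, ((i + 1 : ℕ) : ℤ) * tpHalf (n + 1) (i + 1)
        + ∑ i ∈ range n, tpHalf (n + 1) (i + 1) + (-1 : ℤ) ^ n := by
  have weighted : ∑ i ∈ range (n + 1), (i : ℤ) * tpHalf (n + 1) i
      = ∑ i ∈ range n, ((i + 1 : ℕ) : ℤ) * tpHalf (n + 1) (i + 1) := by
    simp [sum_range_succ', -Nat.cast_add]
  have unweighted : ∑ i ∈ range (n + 1), tpHalf (n + 1) i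
      = ∑ i ∈ range n, tpHalf (n + 1) (i + 1) + (-1 : ℤ) ^ n := by
    rw [sum_range_succ', tpHalf_succ_zero]
  have shifted : ∑ i ∈ range (n + 1), ((i + 1 : ℕ) : ℤ) * tpHalf (n + 1) (i + 1)
      = ∑ i ∈ range n, ((i + 1 : ℕ) : ℤ) * tpHalf (n + 1) (i + 1) := by
    rw [sum_range_succ, tpHalf_of_le le_rfl, mul_zero, add_zero]
  calc ∑ i ∈ range (n + 1), ((i + 1 : ℕ) : ℤ) * tpHalf (n + 2) (i + 1)
      = ∑ i ∈ range (n + 1), (i : ℤ) * tpHalf (n + 1) i + ∑ i ∈ range (n + 1), tpHalf (n + 1) i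
        + ∑ i ∈ range (n + 1), ((i + 1 : ℕ) : ℤ) * tpHalf (n + 1) (i + 1) := by
        rw [← sum_add_distrib, ← sum_add_distrib]
        refine sum_congr rfl fun i _ => ?_
        rw [tpHalf_succ_succ]; push_cast; ring
    _ = _ := by rw [weighted, unweighted, shifted]; ring

lemma tpKnot_succ (c g : ℕ) : tpKnot c (g + 1) = tpHalf ((c + 1) / 2) (g + 1) := by
  rw [tpKnot, if_neg g.succ_ne_zero, tpHalf, altChooseSum]

lemma sum_Icc_one_eq_sum_range {M : Type*} [AddCommMonoid M] (m : ℕ) (f : ℕ → M) :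
    ∑ i ∈ Icc 1 m, f i = ∑ i ∈ range m, f (i + 1) := by
  rw [← Ico_add_one_right_eq_Icc, sum_Ico_eq_sum_range, Nat.add_sub_cancel]
  simp only [add_comm 1]

lemma gpTotal_eq (c : ℕ) :
    gpTotal c = ∑ i ∈ range ((c - 1) / 2), ((i + 1 : ℕ) : ℤ) * tpHalf ((c + 1) / 2) (i + 1) := by
  simp only [gpTotal, sum_Icc_one_eq_sum_range, tpKnot_succ]

lemma tpTotal_eq (c : ℕ) :
    tpTotal c = ∑ i ∈ range ((c - 1) / 2), tpHalf ((c + 1) / 2) (i + 1) := by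
  simp only [tpTotal, sum_Icc_one_eq_sum_range, tpKnot_succ]

/-- For all integers c ≥ 5, the total palindromic genus satisfies
g_p(c) = 2·g_p(c−2) + t_p(c−2) + (−1)^{⌊(c+1)/2⌋}. -/
theorem gpTotal_recurrence (c : ℕ) (hc : 5 ≤ c) :
    gpTotal c = 2 * gpTotal (c - 2) + tpTotal (c - 2) + (-1 : ℤ) ^ ((c + 1) / 2) := by
  obtain ⟨n, hn⟩ : ∃ n, (c + 1) / 2 = n + 2 := ⟨(c + 1) / 2 - 2, by omega⟩
  rw [gpTotal_eq, gpTotal_eq, tpTotal_eq, hn, show (c - 1) / 2 = n + 1 by omega,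
    show (c - 2 - 1) / 2 = n by omega, show (c - 2 + 1) / 2 = n + 1 by omega, pow_add, neg_one_sq,
    mul_one]
  exact sum_mul_tpHalf_succ n
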